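/- An object X of a closed symmetric monoidal category is dualizable if (and only if) the canonical morphism m : X ⊗ [X, 1] → [X, X], adjoint to (id_X ⊗ ev_X) : X ⊗ [X,1] ⊗ X → X, is a split epimorphism; given a section s of m, the composite 1 → [X, X] → X ⊗ [X,1] of the name of id_X with s serves as coevaluation, with counit ev_X : [X,1] ⊗ X → 1 as evaluation. -/

import Mathlib

/-!
Uncurrying `curry ρ ≫ s ≫ m = curry ρ` yields precisely the first triangle identity for
`coev = curry ρ ≫ s` and `ev`. The second triangle identity follows from the first: whiskered
with `X` and followed by `ev`, the two zigzag composites agree by the interchange law, and a map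
into `[X, 1]` is determined by its composite with `ev`, the counit of the adjunction.
-/

open CategoryTheory MonoidalCategory

universe v u

variable {C : Type u} [Category.{v} C] [MonoidalCategory C] [SymmetricCategory C]

structure Dual (X Xd : C) where
  ev : Xd ⊗ X ⟶ 𝟙_ C
  coev : 𝟙_ C ⟶ X ⊗ Xd
  triangle₁ : (λ_ X).inv ≫ (coev ▷ X) ≫ (α_ X Xd X).hom ≫ (X ◁ ev) ≫ (ρ_ X).hom = 𝟙 X
  triangle₂ : (ρ_ Xd).inv ≫ (Xd ◁ coev) ≫ (α_ Xd X Xd).inv ≫ (ev ▷ Xd) ≫ (λ_ Xd).hom = 𝟙 Xd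

section Zigzag

variable {C : Type u} [Category.{v} C] [MonoidalCategory C] {X A : C}

def leftZigzag (e : A ⊗ X ⟶ 𝟙_ C) (c : 𝟙_ C ⟶ X ⊗ A) : X ⟶ X :=
  (λ_ X).inv ≫ (c ▷ X) ≫ (α_ X A X).hom ≫ (X ◁ e) ≫ (ρ_ X).hom

def rightZigzag (e : A ⊗ X ⟶ 𝟙_ C) (c : 𝟙_ C ⟶ X ⊗ A) : A ⟶ A :=
  (ρ_ A).inv ≫ (A ◁ c) ≫ (α_ A X A).inv ≫ (e ▷ A) ≫ (λ_ A).hom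

theorem whiskerRight_leftUnitor_comp_eq {Y Z : C} (f : Y ⟶ 𝟙_ C) (g : Z ⟶ 𝟙_ C) :
    (f ▷ Z) ≫ (λ_ Z).hom ≫ g = (Y ◁ g) ≫ (ρ_ Y).hom ≫ f := by
  rw [← leftUnitor_naturality, ← rightUnitor_naturality, whisker_exchange_assoc, unitors_equal]

theorem whiskerRight_rightZigzag_comp (e : A ⊗ X ⟶ 𝟙_ C) (c : 𝟙_ C ⟶ X ⊗ A) :
    (rightZigzag e c ▷ X) ≫ e = (A ◁ leftZigzag e c) ≫ e := by
  let P : A ⊗ X ⟶ (A ⊗ X) ⊗ A ⊗ X :=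
    (A ◁ (λ_ X).inv) ≫ (A ◁ c ▷ X) ≫ (A ◁ (α_ X A X).hom) ≫ (α_ A X (A ⊗ X)).inv
  calc (rightZigzag e c ▷ X) ≫ e = P ≫ (e ▷ (A ⊗ X)) ≫ (λ_ (A ⊗ X)).hom ≫ e := by
        simp only [rightZigzag, P]; monoidal
    _ = P ≫ ((A ⊗ X) ◁ e) ≫ (ρ_ (A ⊗ X)).hom ≫ e := by
        rw [whiskerRight_leftUnitor_comp_eq]
    _ = (A ◁ leftZigzag e c) ≫ e := by simp only [leftZigzag, P]; monoidal

end Zigzag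

section Closed

open MonoidalClosed

variable {C : Type u} [Category.{v} C] [MonoidalCategory C] [BraidedCategory C]
  [MonoidalClosed C] (X : C)

def ihomUnitEv : (ihom X).obj (𝟙_ C) ⊗ X ⟶ 𝟙_ C :=
  (β_ _ X).hom ≫ (ihom.ev X).app (𝟙_ C)

theorem ihomUnit_hom_ext {Y : C} {f g : Y ⟶ (ihom X).obj (𝟙_ C)}
    (h : (f ▷ X) ≫ ihomUnitEv X = (g ▷ X) ≫ ihomUnitEv X) : f = g := by
  apply uncurry_injective
  rw [uncurry_eq, uncurry_eq, ← cancel_epi (β_ Y X).hom]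
  simpa only [ihomUnitEv, BraidedCategory.braiding_naturality_left_assoc] using h

theorem rightZigzag_ihomUnitEv_eq_id {c : 𝟙_ C ⟶ X ⊗ (ihom X).obj (𝟙_ C)}
    (h : leftZigzag (ihomUnitEv X) c = 𝟙 X) : rightZigzag (ihomUnitEv X) c = 𝟙 _ :=
  ihomUnit_hom_ext X (by rw [whiskerRight_rightZigzag_comp, h]; simp)

variable {X} {A : C}

def tensorToIhom (e : A ⊗ X ⟶ 𝟙_ C) : X ⊗ A ⟶ (ihom X).obj X :=
  curry ((β_ X (X ⊗ A)).hom ≫ (α_ X A X).hom ≫ (X ◁ e) ≫ (ρ_ X).hom)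

theorem uncurry_comp_tensorToIhom (e : A ⊗ X ⟶ 𝟙_ C) (c : 𝟙_ C ⟶ X ⊗ A) :
    uncurry (c ≫ tensorToIhom e) = (ρ_ X).hom ≫ leftZigzag e c := by
  rw [uncurry_natural_left, tensorToIhom, uncurry_curry,
    BraidedCategory.braiding_naturality_right_assoc, braiding_tensorUnit_right, leftZigzag]
  simp only [Category.assoc]

theorem leftZigzag_eq_id_of_comp_tensorToIhom_eq_id {e : A ⊗ X ⟶ 𝟙_ C}
    {s : (ihom X).obj X ⟶ X ⊗ A} (hs : s ≫ tensorToIhom e = 𝟙 _) :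
    leftZigzag e (curry (ρ_ X).hom ≫ s) = 𝟙 X := by
  have h : (curry (ρ_ X).hom ≫ s) ≫ tensorToIhom e = curry (ρ_ X).hom := by
    rw [Category.assoc, hs, Category.comp_id]
  replace h := congrArg uncurry h
  rwa [uncurry_comp_tensorToIhom, uncurry_curry, cancel_epi_id] at h

end Closed

/-- If the canonical morphism `m : X ⊗ [X,1] ⟶ [X,X]` (adjoint to `id_X ⊗ ev`) admits
a section `s`, then `X` is dualizable with dual `[X,1]`: the composite of the name of
`id_X` with `s` serves as coevaluation, with the counit `ev : [X,1] ⊗ X ⟶ 1` of the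
tensor-hom adjunction as evaluation. -/
theorem dualizable_of_splitEpi [MonoidalClosed C] (X : C)
    (m : X ⊗ (ihom X).obj (𝟙_ C) ⟶ (ihom X).obj X)
    (hm : m = MonoidalClosed.curry
      ((β_ X (X ⊗ (ihom X).obj (𝟙_ C))).hom ≫ (α_ X ((ihom X).obj (𝟙_ C)) X).hom ≫
        (X ◁ ((β_ ((ihom X).obj (𝟙_ C)) X).hom ≫ (ihom.ev X).app (𝟙_ C))) ≫ (ρ_ X).hom))
    (s : (ihom X).obj X ⟶ X ⊗ (ihom X).obj (𝟙_ C)) (hs : s ≫ m = 𝟙 _) :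
    ∃ d : Dual X ((ihom X).obj (𝟙_ C)),
      d.coev = MonoidalClosed.curry (ρ_ X).hom ≫ s ∧
      d.ev = (β_ ((ihom X).obj (𝟙_ C)) X).hom ≫ (ihom.ev X).app (𝟙_ C) := by
  subst hm
  have triangle : leftZigzag (ihomUnitEv X) (MonoidalClosed.curry (ρ_ X).hom ≫ s) = 𝟙 X :=
    leftZigzag_eq_id_of_comp_tensorToIhom_eq_id hs
  exact ⟨⟨ihomUnitEv X, _, triangle, rightZigzag_ihomUnitEv_eq_id X triangle⟩, rfl, rfl⟩
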